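/- arXiv:2604.20695 — 8 statements merged into one kernel-verified Lean document; each statement's English description precedes it below -/
import Mathlib

section
/- Let k_1 ≤ k_2 ≤ ... ≤ k_n be real numbers and 1 ≤ p ≤ n/2 an integer. Suppose that for some integer q with p ≤ min{q, n−q} one has k_1 + ... + k_q ≥ 0 (q-nonnegativity). Then (∑_{i=1}^{n-p} k_i)(∑_{i=n-p+1}^{n} k_i) ≥ (∑_{i=1}^{p} k_i)(∑_{i=p+1}^{n} k_i). -/
/-!
Write `A`, `M`, `B` for the sums of the first `p`, the middle `n - 2p` and the last `p` of the
`k i`. The two sides are `A (M + B)` and `(A + M) B`, so their difference is `M (B - A)`.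
Monotonicity gives `A ≤ B`. For `M ≥ 0`: in a nondecreasing sequence the average of a prefix is at
most the average of the whole, and the average of a suffix at least that; hence `q`-nonnegativity
propagates to the prefix of length `n - p ≥ q`, and then to its suffix, which is the middle block.
-/

open Finset

section MonotonePrefixSums

variable {k : ℕ → ℝ} {p q r : ℕ}

theorem sub_mul_sum_Ioc_zero_le_mul_sum_Ioc (hk : MonotoneOn k (Set.Icc 1 r))
    (hp : 0 < p) (hpr : p ≤ r) :
    ((r : ℝ) - p) * ∑ i ∈ Ioc 0 p, k i ≤ p * ∑ i ∈ Ioc p r, k i := by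
  have hprefix : ∑ i ∈ Ioc 0 p, k i ≤ p * k p := by
    have := sum_le_card_nsmul (Ioc 0 p) k (k p) fun i hi => by
      simp only [mem_Ioc] at hi
      exact hk ⟨by omega, by omega⟩ ⟨by omega, hpr⟩ hi.2
    rwa [Nat.card_Ioc, Nat.sub_zero, nsmul_eq_mul] at this
  have hsuffix : ((r : ℝ) - p) * k p ≤ ∑ i ∈ Ioc p r, k i := by
    have := card_nsmul_le_sum (Ioc p r) k (k p) fun i hi => by
      simp only [mem_Ioc] at hi
      exact hk ⟨by omega, hpr⟩ ⟨by omega, hi.2⟩ hi.1.le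
    rwa [Nat.card_Ioc, nsmul_eq_mul, Nat.cast_sub hpr] at this
  have hrp : (0 : ℝ) ≤ r - p := sub_nonneg.mpr (by exact_mod_cast hpr)
  calc ((r : ℝ) - p) * ∑ i ∈ Ioc 0 p, k i ≤ ((r : ℝ) - p) * (p * k p) :=
        mul_le_mul_of_nonneg_left hprefix hrp
    _ = p * (((r : ℝ) - p) * k p) := by ring
    _ ≤ p * ∑ i ∈ Ioc p r, k i := mul_le_mul_of_nonneg_left hsuffix (Nat.cast_nonneg p)

theorem sum_Ioc_zero_nonneg_of_le (hk : MonotoneOn k (Set.Icc 1 r)) (hq : 0 < q) (hqr : q ≤ r)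
    (hsum : 0 ≤ ∑ i ∈ Ioc 0 q, k i) : 0 ≤ ∑ i ∈ Ioc 0 r, k i := by
  have havg := sub_mul_sum_Ioc_zero_le_mul_sum_Ioc hk hq hqr
  have key : 0 ≤ (q : ℝ) * ∑ i ∈ Ioc 0 r, k i := by
    rw [← sum_Ioc_consecutive k (Nat.zero_le q) hqr]
    linear_combination havg + mul_nonneg (Nat.cast_nonneg r) hsum
  exact nonneg_of_mul_nonneg_right key (by exact_mod_cast hq)

theorem sum_Ioc_nonneg_of_sum_Ioc_zero_nonneg (hk : MonotoneOn k (Set.Icc 1 r)) (hp : 0 < p)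
    (hpr : p ≤ r) (hsum : 0 ≤ ∑ i ∈ Ioc 0 r, k i) : 0 ≤ ∑ i ∈ Ioc p r, k i := by
  have havg := sub_mul_sum_Ioc_zero_le_mul_sum_Ioc hk hp hpr
  rw [← sum_Ioc_consecutive k (Nat.zero_le p) hpr] at hsum
  have hrp : (0 : ℝ) ≤ r - p := sub_nonneg.mpr (by exact_mod_cast hpr)
  have key : 0 ≤ (r : ℝ) * ∑ i ∈ Ioc p r, k i := by
    linear_combination havg + mul_nonneg hrp hsum
  exact nonneg_of_mul_nonneg_right key (by exact_mod_cast hp.trans_le hpr)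

theorem sum_Ioc_zero_le_sum_Ioc_add (hk : MonotoneOn k (Set.Icc 1 r)) (d : ℕ) (hpr : p + d ≤ r) :
    ∑ i ∈ Ioc 0 p, k i ≤ ∑ i ∈ Ioc d (p + d), k i := by
  rw [show Ioc d (p + d) = (Ioc 0 p).map (addRightEmbedding d) by simp, sum_map]
  refine sum_le_sum fun i hi => ?_
  simp only [mem_Ioc, addRightEmbedding_apply] at hi ⊢
  exact hk ⟨by omega, by omega⟩ ⟨by omega, by omega⟩ (by omega)

end MonotonePrefixSums

/-- for ordered reals `k 1 ≤ ⋯ ≤ k n` that are `q`-nonnegative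
(`k 1 + ⋯ + k q ≥ 0`) and `1 ≤ p ≤ min {q, n - q}`, one has
`(k 1 + ⋯ + k (n-p)) * (k (n-p+1) + ⋯ + k n) ≥ (k 1 + ⋯ + k p) * (k (p+1) + ⋯ + k n)`. -/
theorem stmt1 (n p q : ℕ) (k : ℕ → ℝ) (hk : MonotoneOn k (Set.Icc 1 n))
    (hp1 : 1 ≤ p) (hpq : p ≤ q) (hpnq : p + q ≤ n)
    (hqnonneg : 0 ≤ ∑ i ∈ Icc 1 q, k i) :
    (∑ i ∈ Icc 1 p, k i) * (∑ i ∈ Icc (p + 1) n, k i) ≤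
      (∑ i ∈ Icc 1 (n - p), k i) * (∑ i ∈ Icc (n - p + 1) n, k i) := by
  have hIcc_one (m : ℕ) : Icc 1 m = Ioc 0 m := Icc_add_one_left_eq_Ioc 0 m
  simp only [hIcc_one, Icc_add_one_left_eq_Ioc] at hqnonneg ⊢
  have hk' : MonotoneOn k (Set.Icc 1 (n - p)) := hk.mono (Set.Icc_subset_Icc_right (by omega))
  have hmiddle : 0 ≤ ∑ i ∈ Ioc p (n - p), k i :=
    sum_Ioc_nonneg_of_sum_Ioc_zero_nonneg hk' hp1 (by omega)
      (sum_Ioc_zero_nonneg_of_le hk' (by omega) (by omega) hqnonneg)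
  have houter : ∑ i ∈ Ioc 0 p, k i ≤ ∑ i ∈ Ioc (n - p) n, k i := by
    simpa [Nat.add_sub_cancel' (by omega : p ≤ n)] using
      sum_Ioc_zero_le_sum_Ioc_add (p := p) hk (n - p) (by omega)
  rw [← sum_Ioc_consecutive k (by omega : p ≤ n - p) (Nat.sub_le n p),
    ← sum_Ioc_consecutive k (Nat.zero_le p) (by omega : p ≤ n - p)]
  linear_combination mul_le_mul_of_nonneg_left houter hmiddle
end

section
/- Let k_1 ≤ ... ≤ k_n be real numbers with k_1 + ... + k_q ≥ 0 for some 1 ≤ q ≤ n−1, and let 1 ≤ p ≤ min{q, n−q}. If ∑_{i=1}^p k_i < 0, then |∑_{i=1}^p k_i| ≤ ((q−p)/(n−q)) · (k_1 + ... + k_n). -/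
/-!
Write `S_m = k 1 + ⋯ + k m`. By monotonicity each of `k (p+1), …, k q` is at most `k q`, so
`0 ≤ S_q ≤ S_p + (q - p) k q`, i.e. `|S_p| = -S_p ≤ (q - p) k q`. Each of `k (q+1), …, k n` is at
least `k q`, so `(n - q) k q ≤ S_n - S_q ≤ S_n`, i.e. `k q ≤ S_n / (n - q)`.
-/

open Finset

section MonotoneOn

variable {α M : Type*} [Preorder α] [LocallyFiniteOrder α]
  [AddCommMonoid M] [PartialOrder M] [IsOrderedAddMonoid M] {f : α → M} {a b : α}

theorem Finset.sum_Ioc_le_card_nsmul_of_monotoneOn (hf : MonotoneOn f (Set.Icc a b)) :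
    ∑ i ∈ Ioc a b, f i ≤ #(Ioc a b) • f b :=
  sum_le_card_nsmul _ _ _ fun _ hi ↦
    have hi := mem_Ioc.1 hi
    hf ⟨hi.1.le, hi.2⟩ ⟨hi.1.le.trans hi.2, le_rfl⟩ hi.2

theorem Finset.card_nsmul_le_sum_Ioc_of_monotoneOn (hf : MonotoneOn f (Set.Icc a b)) :
    #(Ioc a b) • f a ≤ ∑ i ∈ Ioc a b, f i :=
  card_nsmul_le_sum _ _ _ fun _ hi ↦
    have hi := mem_Ioc.1 hi
    hf ⟨le_rfl, hi.1.le.trans hi.2⟩ ⟨hi.1.le, hi.2⟩ hi.1.le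

end MonotoneOn

theorem Finset.sum_Icc_one_add_sum_Ioc {M : Type*} [AddCommMonoid M] (f : ℕ → M) {m n : ℕ}
    (h : m ≤ n) : ∑ i ∈ Icc 1 m, f i + ∑ i ∈ Ioc m n, f i = ∑ i ∈ Icc 1 n, f i := by
  have := sum_Ioc_consecutive f m.zero_le h
  rwa [← Icc_add_one_left_eq_Ioc 0 m, ← Icc_add_one_left_eq_Ioc 0 n, zero_add] at this

theorem stmt4_general (n p q : ℕ) (k : ℕ → ℝ) (hk : MonotoneOn k (Set.Icc 1 n))
    (hqn : q + 1 ≤ n)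
    (hpq : p ≤ q)
    (hqnonneg : 0 ≤ ∑ i ∈ Icc 1 q, k i)
    (hneg : ∑ i ∈ Icc 1 p, k i < 0) :
    |∑ i ∈ Icc 1 p, k i| ≤ ((q : ℝ) - p) / ((n : ℝ) - q) * (∑ i ∈ Icc 1 n, k i) := by
  have hp : 1 ≤ p := Nat.one_le_iff_ne_zero.2 <| by rintro rfl; simp at hneg
  have hmid : ∑ i ∈ Ioc p q, k i ≤ ((q : ℝ) - p) * k q := by
    simpa [Nat.cast_sub hpq] using
      sum_Ioc_le_card_nsmul_of_monotoneOn (a := p) (b := q)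
        (hk.mono (Set.Icc_subset_Icc hp (by omega)))
  have htop : ((n : ℝ) - q) * k q ≤ ∑ i ∈ Ioc q n, k i := by
    simpa [Nat.cast_sub (by omega : q ≤ n)] using
      card_nsmul_le_sum_Ioc_of_monotoneOn (a := q) (b := n)
        (hk.mono (Set.Icc_subset_Icc_left (by omega)))
  have hnq : (0 : ℝ) < n - q := by
    rw [sub_pos]; exact_mod_cast Nat.lt_of_succ_le hqn
  have hkq : k q ≤ (∑ i ∈ Icc 1 n, k i) / (n - q) := by
    rw [le_div_iff₀' hnq, ← sum_Icc_one_add_sum_Ioc k (by omega : q ≤ n)]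
    linarith
  calc |∑ i ∈ Icc 1 p, k i| = -∑ i ∈ Icc 1 p, k i := abs_of_neg hneg
    _ ≤ ((q : ℝ) - p) * k q := by rw [← sum_Icc_one_add_sum_Ioc k hpq] at hqnonneg; linarith
    _ ≤ ((q : ℝ) - p) * ((∑ i ∈ Icc 1 n, k i) / (n - q)) :=
        mul_le_mul_of_nonneg_left hkq (sub_nonneg.2 (by exact_mod_cast hpq))
    _ = ((q : ℝ) - p) / ((n : ℝ) - q) * (∑ i ∈ Icc 1 n, k i) := by ring

/-- if `k 1 ≤ ⋯ ≤ k n` are `q`-nonnegative for some `1 ≤ q ≤ n - 1`,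
`1 ≤ p ≤ min {q, n - q}` and `k 1 + ⋯ + k p < 0`, then
`|k 1 + ⋯ + k p| ≤ ((q - p)/(n - q)) * (k 1 + ⋯ + k n)`. -/
theorem stmt4 (n p q : ℕ) (k : ℕ → ℝ) (hk : MonotoneOn k (Set.Icc 1 n))
    (hq1 : 1 ≤ q) (hqn : q + 1 ≤ n)
    (hp1 : 1 ≤ p) (hpq : p ≤ q) (hpnq : p + q ≤ n)
    (hqnonneg : 0 ≤ ∑ i ∈ Icc 1 q, k i)
    (hneg : ∑ i ∈ Icc 1 p, k i < 0) :
    |∑ i ∈ Icc 1 p, k i| ≤ ((q : ℝ) - p) / ((n : ℝ) - q) * (∑ i ∈ Icc 1 n, k i) :=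
  stmt4_general n p q k hk hqn hpq hqnonneg hneg
end

section
/- Let k_1 ≤ ... ≤ k_n be real numbers with k_1 + ... + k_q ≥ 0 for some integer 1 ≤ q ≤ n−1, let 1 ≤ p ≤ min{q, n−q}, and set T = k_1 + ... + k_n. Then (∑_{i=1}^p k_i)(∑_{i=p+1}^n k_i) ≥ − ((n−p)(q−p)/(n−q)²) · T². -/
set_option maxHeartbeats 1000000


open Finset

private lemma blockIneq (n a b c : ℕ) (k : ℕ → ℝ) (hk : MonotoneOn k (Set.Icc 1 n))
    (hab : a ≤ b) (hbc : b ≤ c) (hcn : c ≤ n) :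
    ((c : ℝ) - b) * ∑ i ∈ Ioc a b, k i ≤ ((b : ℝ) - a) * ∑ j ∈ Ioc b c, k j := by
  have key : ∑ i ∈ Ioc a b, ∑ _j ∈ Ioc b c, k i ≤ ∑ _i ∈ Ioc a b, ∑ j ∈ Ioc b c, k j := by
    refine sum_le_sum fun i hi => sum_le_sum fun j hj => ?_
    simp only [mem_Ioc] at hi hj
    exact hk ⟨by omega, by omega⟩ ⟨by omega, by omega⟩ (by omega)
  simp only [sum_const, Nat.card_Ioc, nsmul_eq_mul] at key
  rw [← mul_sum] at key
  have h1 : ((c - b : ℕ) : ℝ) = (c : ℝ) - b := by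
    push_cast [Nat.cast_sub hbc]; ring
  have h2 : ((b - a : ℕ) : ℝ) = (b : ℝ) - a := by
    push_cast [Nat.cast_sub hab]; ring
  rwa [h1, h2] at key

/-- key eigenvalue estimate: if `k 1 ≤ ⋯ ≤ k n` are `q`-nonnegative
for some `1 ≤ q ≤ n - 1` and `1 ≤ p ≤ min {q, n - q}`, `T = k 1 + ⋯ + k n`, then
`(k 1 + ⋯ + k p)(k (p+1) + ⋯ + k n) ≥ -((n-p)(q-p)/(n-q)²) T²`. -/
theorem stmt5 (n p q : ℕ) (k : ℕ → ℝ) (hk : MonotoneOn k (Set.Icc 1 n))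
    (hq1 : 1 ≤ q) (hqn : q + 1 ≤ n)
    (hp1 : 1 ≤ p) (hpq : p ≤ q) (hpnq : p + q ≤ n)
    (hqnonneg : 0 ≤ ∑ i ∈ Icc 1 q, k i) :
    (∑ i ∈ Icc 1 p, k i) * (∑ i ∈ Icc (p + 1) n, k i) ≥
      -(((n : ℝ) - p) * ((q : ℝ) - p) / ((n : ℝ) - q) ^ 2) * (∑ i ∈ Icc 1 n, k i) ^ 2 := by
  have e : ∀ m : ℕ, Icc 1 m = Ioc 0 m := fun m => by
    ext x; simp only [mem_Icc, mem_Ioc]; omega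
  have e2 : Icc (p + 1) n = Ioc p n := by
    ext x; simp only [mem_Icc, mem_Ioc]; omega
  rw [e, e, e2]
  rw [e] at hqnonneg
  set A := ∑ i ∈ Ioc 0 p, k i with hA
  set B := ∑ i ∈ Ioc p n, k i with hB
  set M := ∑ i ∈ Ioc p q, k i with hM
  set C := ∑ i ∈ Ioc q n, k i with hC
  have hpn : p ≤ n := by omega
  have hqn' : q ≤ n := by omega
  have hsplitT : A + B = ∑ i ∈ Ioc 0 n, k i :=
    sum_Ioc_consecutive k (Nat.zero_le p) hpn
  have hsplitq : A + M = ∑ i ∈ Ioc 0 q, k i :=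
    sum_Ioc_consecutive k (Nat.zero_le p) hpq
  have hsplitB : M + C = B := sum_Ioc_consecutive k hpq hqn'
  have L1 := blockIneq n 0 p n k hk (Nat.zero_le p) hpn le_rfl
  have L2 := blockIneq n p q n k hk hpq hqn' le_rfl
  rw [← hsplitq] at hqnonneg
  rw [← hsplitT]
  -- real cast facts
  have cp1 : (1 : ℝ) ≤ p := by exact_mod_cast hp1
  have cpq : (p : ℝ) ≤ q := by exact_mod_cast hpq
  have cqn : (q : ℝ) + 1 ≤ n := by exact_mod_cast hqn
  have hNQ : (0 : ℝ) < (n : ℝ) - q := by linarith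
  have hD : (0 : ℝ) < ((n : ℝ) - q) ^ 2 := by positivity
  rw [ge_iff_le, neg_mul, div_mul_eq_mul_div, ← neg_div, div_le_iff₀ hD]
  rw [show (∑ i ∈ Ioc 0 p, k i) = A from rfl, show (∑ i ∈ Ioc p n, k i) = B from rfl] at L1
  rw [show (∑ i ∈ Ioc p q, k i) = M from rfl, show (∑ j ∈ Ioc q n, k j) = C from rfl] at L2
  clear_value A B M C
  clear hk e e2 hA hB hM hC
  simp only [Nat.cast_zero, sub_zero] at L1
  -- goal : -((n-p)*(q-p)*(A+B)^2) ≤ A*B*((n-q)^2)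
  rcases le_or_gt 0 A with hA0 | hA0
  · have hB0 : 0 ≤ B := by nlinarith
    have hAB : 0 ≤ A * B := mul_nonneg hA0 hB0
    nlinarith [mul_nonneg (mul_nonneg (by linarith : (0:ℝ) ≤ (n:ℝ) - p)
        (by linarith : (0:ℝ) ≤ (q:ℝ) - p)) (sq_nonneg (A + B)),
      mul_nonneg hAB hD.le]
  · -- A < 0
    have hx : (0 : ℝ) ≤ -A := by linarith
    have hMA : -A ≤ M := by linarith
    have h5 : (0 : ℝ) < ((n : ℝ) - q) * M := by nlinarith
    have hC0 : 0 < C := by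
      rcases le_or_gt C 0 with h | h
      · exfalso
        have : ((q : ℝ) - p) * C ≤ 0 := mul_nonpos_of_nonneg_of_nonpos (by linarith) h
        linarith
      · exact h
    have hT0 : (0 : ℝ) ≤ A + B := by linarith
    have key : ((n : ℝ) - q) * (-A) ≤ ((q : ℝ) - p) * (A + B) := by
      have h1 : ((n : ℝ) - q) * (-A) ≤ ((n : ℝ) - q) * M :=
        mul_le_mul_of_nonneg_left hMA hNQ.le
      have h2 : ((q : ℝ) - p) * C ≤ ((q : ℝ) - p) * (A + B) := by
        have h3 : C ≤ A + B := by linarith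
        exact mul_le_mul_of_nonneg_left h3 (by linarith)
      linarith
    have h4 : (0 : ℝ) ≤ ((q : ℝ) - p) * (A + B) - ((n : ℝ) - q) * (-A) := by linarith
    nlinarith [mul_nonneg h4 (mul_nonneg (by linarith : (0:ℝ) ≤ (n:ℝ) - p) hT0),
      mul_nonneg h4 (mul_nonneg hNQ.le hx)]
end

section
/- Let k_1 ≤ ... ≤ k_n be real numbers with k_1 + ... + k_q > 0 (strict q-positivity) for some 1 ≤ q ≤ n−1, and let 1 ≤ p ≤ min{q, n−q}, T = k_1 + ... + k_n. Then the strict inequality (∑_{i=1}^p k_i)(∑_{i=p+1}^n k_i) > − ((n−p)(q−p)/(n−q)²) · T² holds. -/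
open Finset

/-- strict eigenvalue estimate: if `k 1 ≤ ⋯ ≤ k n` are strictly
`q`-positive (`k 1 + ⋯ + k q > 0`) for some `1 ≤ q ≤ n - 1` and
`1 ≤ p ≤ min {q, n - q}`, `T = k 1 + ⋯ + k n`, then the strict inequality
`(k 1 + ⋯ + k p)(k (p+1) + ⋯ + k n) > -((n-p)(q-p)/(n-q)²) T²` holds. -/
theorem stmt6 (n p q : ℕ) (k : ℕ → ℝ) (hk : MonotoneOn k (Set.Icc 1 n))
    (hq1 : 1 ≤ q) (hqn : q + 1 ≤ n)
    (hp1 : 1 ≤ p) (hpq : p ≤ q) (hpnq : p + q ≤ n)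
    (hqpos : 0 < ∑ i ∈ Icc 1 q, k i) :
    (∑ i ∈ Icc 1 p, k i) * (∑ i ∈ Icc (p + 1) n, k i) >
      -(((n : ℝ) - p) * ((q : ℝ) - p) / ((n : ℝ) - q) ^ 2) * (∑ i ∈ Icc 1 n, k i) ^ 2 := by
  have e : ∀ m : ℕ, Icc 1 m = Ioc 0 m := fun m => Finset.Icc_add_one_left_eq_Ioc 0 m
  rw [e p, e n, Finset.Icc_add_one_left_eq_Ioc]
  rw [e q] at hqpos
  set A := ∑ i ∈ Ioc 0 p, k i with hA
  set B := ∑ i ∈ Ioc p n, k i with hB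
  set S := ∑ i ∈ Ioc 0 q, k i with hS
  set T := ∑ i ∈ Ioc 0 n, k i with hT
  set K := k q with hK
  have hqn' : q ≤ n := by omega
  -- sum splits
  have splitAB : A + B = T := Finset.sum_Ioc_consecutive k (Nat.zero_le p) (by omega)
  have splitApq : A + ∑ i ∈ Ioc p q, k i = S := Finset.sum_Ioc_consecutive k (Nat.zero_le p) hpq
  have splitSqn : S + ∑ i ∈ Ioc q n, k i = T := Finset.sum_Ioc_consecutive k (Nat.zero_le q) hqn'
  -- bounds
  have hqmem : q ∈ Set.Icc 1 n := ⟨hq1, hqn'⟩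
  have bA : A ≤ (p : ℝ) * K := by
    have := Finset.sum_le_card_nsmul (Ioc 0 p) k K (fun i hi => by
      rw [Finset.mem_Ioc] at hi
      exact hk ⟨hi.1, by omega⟩ hqmem (by omega))
    simpa [Nat.card_Ioc, nsmul_eq_mul] using this
  have bpq : ∑ i ∈ Ioc p q, k i ≤ ((q : ℝ) - p) * K := by
    have := Finset.sum_le_card_nsmul (Ioc p q) k K (fun i hi => by
      rw [Finset.mem_Ioc] at hi
      exact hk ⟨by omega, by omega⟩ hqmem hi.2)
    rw [Nat.card_Ioc, nsmul_eq_mul] at this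
    rwa [Nat.cast_sub hpq] at this
  have bS : S ≤ (q : ℝ) * K := by
    have := Finset.sum_le_card_nsmul (Ioc 0 q) k K (fun i hi => by
      rw [Finset.mem_Ioc] at hi
      exact hk ⟨hi.1, by omega⟩ hqmem hi.2)
    simpa [Nat.card_Ioc, nsmul_eq_mul] using this
  have bqn : ((n : ℝ) - q) * K ≤ ∑ i ∈ Ioc q n, k i := by
    have := Finset.card_nsmul_le_sum (Ioc q n) k K (fun i hi => by
      rw [Finset.mem_Ioc] at hi
      exact hk hqmem ⟨by omega, hi.2⟩ (le_of_lt hi.1))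
    rw [Nat.card_Ioc, nsmul_eq_mul] at this
    rwa [Nat.cast_sub hqn'] at this
  -- numeric facts
  have hQ : (1 : ℝ) ≤ (q : ℝ) := by exact_mod_cast hq1
  have hNQ : (1 : ℝ) ≤ (n : ℝ) - q := by
    have : (q : ℝ) + 1 ≤ n := by exact_mod_cast hqn
    linarith
  have hQP : (0 : ℝ) ≤ (q : ℝ) - p := by
    have : (p : ℝ) ≤ q := by exact_mod_cast hpq
    linarith
  have hPNP : (p : ℝ) ≤ (n : ℝ) - p := by
    have : (p : ℝ) + q ≤ n := by exact_mod_cast hpnq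
    linarith
  have hKpos : 0 < K := by nlinarith
  -- claim 1 : 0 < (n-q)A + (q-p)T
  have claim1 : 0 < ((n : ℝ) - q) * A + ((q : ℝ) - p) * T := by
    have h1 : ((q : ℝ) - p) * (((n : ℝ) - q) * K) ≤ ((q : ℝ) - p) * (∑ i ∈ Ioc q n, k i) :=
      mul_le_mul_of_nonneg_left bqn hQP
    have h2 : ((n : ℝ) - q) * (∑ i ∈ Ioc p q, k i) ≤ ((n : ℝ) - q) * (((q : ℝ) - p) * K) :=
      mul_le_mul_of_nonneg_left bpq (by linarith)
    nlinarith [hqpos, splitApq, splitSqn]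
  -- claim 2 : 0 < (n-p)T - (n-q)A
  have claim2 : 0 < ((n : ℝ) - p) * T - ((n : ℝ) - q) * A := by
    have h1 : ((n : ℝ) - p) * (((n : ℝ) - q) * K) ≤ ((n : ℝ) - p) * (∑ i ∈ Ioc q n, k i) :=
      mul_le_mul_of_nonneg_left bqn (by linarith)
    have h2 : ((n : ℝ) - q) * A ≤ ((n : ℝ) - q) * ((p : ℝ) * K) :=
      mul_le_mul_of_nonneg_left bA (by linarith)
    have h3 : (p : ℝ) * K ≤ ((n : ℝ) - p) * K :=
      mul_le_mul_of_nonneg_right hPNP (le_of_lt hKpos)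
    nlinarith [hqpos, splitSqn]
  have key := mul_pos claim1 claim2
  have hM2 : (0 : ℝ) < ((n : ℝ) - q) ^ 2 := by positivity
  have hBT : B = T - A := by linarith
  have hgoal : 0 < ((n : ℝ) - q) ^ 2 * (A * B) + ((n : ℝ) - p) * ((q : ℝ) - p) * T ^ 2 := by
    rw [hBT]
    have hid : (((n : ℝ) - q) * A + ((q : ℝ) - p) * T) *
        (((n : ℝ) - p) * T - ((n : ℝ) - q) * A) =
        ((n : ℝ) - q) ^ 2 * (A * (T - A)) + ((n : ℝ) - p) * ((q : ℝ) - p) * T ^ 2 := by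
      ring
    linarith [key, hid]
  rw [gt_iff_lt, neg_mul, neg_lt, div_mul_eq_mul_div, lt_div_iff₀ hM2]
  linarith [hgoal]
end

section
/- Let k_1 ≤ ... ≤ k_n be real numbers, 1 ≤ p ≤ n an integer, and for each p-element subset a ⊆ {1,...,n} set K_a = ∑_{i ∈ a} k_i and λ_a = K_a · K_{a^c}, where a^c = {1,...,n} \ a. Then min over all p-subsets a of λ_a is attained either at a = {1,...,p} or at a = {n−p+1,...,n}. -/
open Finset

private lemma sum_aux (n p : ℕ) (k : ℕ → ℝ) (hk : MonotoneOn k (Set.Icc 1 n))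
    (hp1 : 1 ≤ p) (hpn : p ≤ n) (a : Finset ℕ) (ha : a ⊆ Icc 1 n) (hc : a.card = p) :
    (∑ i ∈ Icc 1 p, k i) ≤ (∑ i ∈ a, k i) ∧
      (∑ i ∈ a, k i) ≤ (∑ i ∈ Icc (n - p + 1) n, k i) := by
  set e := a.orderEmbOfFin hc with he
  have hmem : ∀ i : Fin p, e i ∈ Icc 1 n := fun i => ha (a.orderEmbOfFin_mem hc i)
  have hbd : ∀ i : Fin p, 1 ≤ e i ∧ e i ≤ n := by
    intro i; have := hmem i; simp [Finset.mem_Icc] at this; exact this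
  -- lower bound: e i ≥ i + 1
  have hlow' : ∀ m : ℕ, ∀ i : Fin p, (i : ℕ) = m → m + 1 ≤ e i := by
    intro m
    induction m with
    | zero => intro i _; exact (hbd i).1
    | succ m ih =>
        intro i hi
        have hm : m < p := by omega
        set j : Fin p := ⟨m, hm⟩ with hj
        have h1 : e j < e i := by
          apply e.strictMono
          simp [Fin.lt_def, hj, hi]
        have h2 := ih j rfl
        omega
  have hlow : ∀ i : Fin p, (i : ℕ) + 1 ≤ e i := fun i => hlow' _ i rfl
  -- upper bound: e i + (p - 1 - i) ≤ n
  have hhigh : ∀ d : ℕ, ∀ i : Fin p, (i : ℕ) + d = p - 1 → e i + d ≤ n := by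
    intro d
    induction d with
    | zero => intro i _; simpa using (hbd i).2
    | succ m ih =>
        intro i hi
        have hip : (i : ℕ) + 1 < p := by omega
        set j : Fin p := ⟨(i : ℕ) + 1, hip⟩ with hj
        have h1 : e i < e j := by
          apply e.strictMono
          simp [hj, Fin.lt_def]
        have h2 : e j + m ≤ n := ih j (by simp [hj]; omega)
        omega
  -- sum over a equals sum over Fin p
  have hmemiff : ∀ x, x ∈ a ↔ ∃ i : Fin p, e i = x := by
    intro x
    have hrange := a.range_orderEmbOfFin hc
    constructor
    · intro hx
      have hx' : x ∈ Set.range (a.orderEmbOfFin hc) := hrange ▸ (Finset.mem_coe.2 hx)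
      exact hx'
    · rintro ⟨i, hi⟩
      exact hi ▸ a.orderEmbOfFin_mem hc i
  have himg : Finset.image (fun i : Fin p => e i) Finset.univ = a := by
    ext x
    simp only [Finset.mem_image, Finset.mem_univ, true_and]
    exact (hmemiff x).symm
  have hsuma : (∑ i ∈ a, k i) = ∑ i : Fin p, k (e i) := by
    rw [← himg, Finset.sum_image (fun i _ j _ h => e.injective h)]
  have h1p : (∑ i ∈ Icc 1 p, k i) = ∑ i ∈ range p, k (1 + i) := by
    rw [← Finset.Ico_add_one_right_eq_Icc, Finset.sum_Ico_eq_sum_range]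
    simp
  have hlen : n + 1 - (n - p + 1) = p := by omega
  have hnp : (∑ i ∈ Icc (n - p + 1) n, k i) = ∑ i ∈ range p, k (n - p + 1 + i) := by
    rw [← Finset.Ico_add_one_right_eq_Icc, Finset.sum_Ico_eq_sum_range, hlen]
  constructor
  · rw [h1p, hsuma, ← Fin.sum_univ_eq_sum_range (fun i => k (1 + i)) p]
    apply Finset.sum_le_sum
    intro i _
    apply hk
    · simp only [Set.mem_Icc]; have := hlow i; have := (hbd i).2; omega
    · simpa [Set.mem_Icc] using hbd i
    · have := hlow i; omega
  · rw [hnp, hsuma, ← Fin.sum_univ_eq_sum_range (fun i => k (n - p + 1 + i)) p]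
    apply Finset.sum_le_sum
    intro i _
    have hh := hhigh (p - 1 - (i : ℕ)) i (by omega)
    apply hk
    · simpa [Set.mem_Icc] using hbd i
    · simp only [Set.mem_Icc]
      have : (i : ℕ) < p := i.isLt
      omega
    · have : (i : ℕ) < p := i.isLt
      omega

/-- for ordered reals `k 1 ≤ ⋯ ≤ k n` and `λ_a = K_a * K_{aᶜ}` with
`K_a = ∑_{i ∈ a} k i` and `aᶜ = {1,…,n} \ a`, the minimum of `λ_a` over all
`p`-element subsets `a ⊆ {1,…,n}` is attained either at `a = {1,…,p}` or at
`a = {n-p+1,…,n}`. -/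
theorem stmt8 (n p : ℕ) (k : ℕ → ℝ) (hk : MonotoneOn k (Set.Icc 1 n))
    (hp1 : 1 ≤ p) (hpn : p ≤ n)
    (lam : Finset ℕ → ℝ)
    (hlam : ∀ s : Finset ℕ, lam s = (∑ i ∈ s, k i) * (∑ i ∈ Icc 1 n \ s, k i)) :
    ∀ a : Finset ℕ, a ⊆ Icc 1 n → a.card = p →
      min (lam (Icc 1 p)) (lam (Icc (n - p + 1) n)) ≤ lam a := by
  intro a ha hc
  set T : ℝ := ∑ i ∈ Icc 1 n, k i with hT
  have hsd : ∀ s : Finset ℕ, s ⊆ Icc 1 n → (∑ i ∈ Icc 1 n \ s, k i) = T - ∑ i ∈ s, k i := by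
    intro s hs
    rw [Finset.sum_sdiff_eq_sub hs]
  have hsub1 : Icc 1 p ⊆ Icc 1 n := Finset.Icc_subset_Icc le_rfl hpn
  have hsub2 : Icc (n - p + 1) n ⊆ Icc 1 n := Finset.Icc_subset_Icc (by omega) le_rfl
  set x : ℝ := ∑ i ∈ Icc 1 p, k i
  set y : ℝ := ∑ i ∈ Icc (n - p + 1) n, k i
  set t : ℝ := ∑ i ∈ a, k i
  have hbounds := sum_aux n p k hk hp1 hpn a ha hc
  have hxt : x ≤ t := hbounds.1
  have hty : t ≤ y := hbounds.2
  have e1 : lam (Icc 1 p) = x * (T - x) := by rw [hlam, hsd _ hsub1]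
  have e2 : lam (Icc (n - p + 1) n) = y * (T - y) := by rw [hlam, hsd _ hsub2]
  have e3 : lam a = t * (T - t) := by rw [hlam, hsd _ ha]
  rw [e1, e2, e3]
  rcases le_or_gt (x + t) T with h | h
  · exact le_trans (min_le_left _ _) (by nlinarith)
  · exact le_trans (min_le_right _ _) (by nlinarith)
end

section
/- Let A be a self-adjoint endomorphism of an n-dimensional real inner product space V with orthonormal eigenbasis e_1,...,e_n and eigenvalues k_1,...,k_n. For 1 ≤ p ≤ n define A^{[p]} on Λ^p V* by (A^{[p]}ω)(v_1,...,v_p) = ∑_i ω(v_1,...,A v_i,...,v_p), and T_A^{[p]} = (tr A)·A^{[p]} − A^{[p]}∘A^{[p]}. Then for every p-subset a = {i_1 < ... < i_p} of {1,...,n}, the p-form Θ_a = θ_{i_1} ∧ ... ∧ θ_{i_p} (θ_j the dual basis) is an eigenvector of T_A^{[p]} with eigenvalue K_a · K_{★a}, where K_a = ∑_{i∈a} k_i and ★a = {1,...,n} \ a. -/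
open Finset

/-! On the wedge `Θ_a` of dual basis forms, the derivation extension `A^{[p]}` acts as the
scalar `K_a`: evaluated on a tuple of distinct eigenvectors `e_{v 1}, …, e_{v p}` it multiplies
by `∑ k (v i)`, and `Θ_a` vanishes on that tuple unless `{v 1, …, v p} = a`. Then
`T_A^{[p]} Θ_a = (tr A · K_a − K_a²) Θ_a`, and `tr A − K_a = K_{★a}`. -/

def IsDerivationExtension {R M N ι : Type*} [CommSemiring R] [AddCommMonoid M] [Module R M]
    [AddCommMonoid N] [Module R N] [Fintype ι] [DecidableEq ι]
    (A : M →ₗ[R] M) (D : M [⋀^ι]→ₗ[R] N →ₗ[R] M [⋀^ι]→ₗ[R] N) : Prop :=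
  ∀ (ω : M [⋀^ι]→ₗ[R] N) (v : ι → M), D ω v = ∑ i, ω (Function.update v i (A (v i)))

theorem IsDerivationExtension.apply_eigenvectors {R M N ι κ : Type*} [CommSemiring R]
    [AddCommMonoid M] [Module R M] [AddCommMonoid N] [Module R N] [Fintype ι] [DecidableEq ι]
    {A : M →ₗ[R] M} {D : M [⋀^ι]→ₗ[R] N →ₗ[R] M [⋀^ι]→ₗ[R] N} (hD : IsDerivationExtension A D)
    {b : κ → M} {k : κ → R} (hb : ∀ j, A (b j) = k j • b j) (ω : M [⋀^ι]→ₗ[R] N) (v : ι → κ) :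
    D ω (fun i => b (v i)) = (∑ i, k (v i)) • ω (fun i => b (v i)) := by
  rw [hD, sum_smul]
  refine sum_congr rfl fun i _ => ?_
  rw [hb, ω.map_update_smul, Function.update_eq_self]

theorem Finset.sum_comp_eq_sum_of_injective {ι κ M : Type*} [Fintype κ] [AddCommMonoid M]
    {s : Finset ι} {v : κ → ι} (hv : Function.Injective v) (hvs : ∀ i, v i ∈ s)
    (hcard : s.card = Fintype.card κ) (f : ι → M) :
    ∑ i, f (v i) = ∑ x ∈ s, f x := by
  classical
  have himage : univ.image v = s :=
    eq_of_subset_of_card_le (image_subset_iff.mpr fun i _ => hvs i)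
      (by rw [hcard, card_image_of_injective _ hv, card_univ])
  rw [← himage, sum_image fun x _ y _ h => hv h]

theorem Orthonormal.det_inner_eq_zero_of_notMem_range {ι κ V : Type*} [Fintype κ]
    [DecidableEq κ] [NormedAddCommGroup V] [InnerProductSpace ℝ V] {e : ι → V}
    (he : Orthonormal ℝ e) (σ : κ → ι) {v : κ → ι} {i : κ} (hi : v i ∉ Set.range σ) :
    Matrix.det (Matrix.of fun i j : κ => (inner ℝ (e (σ j)) (e (v i)) : ℝ)) = 0 := by
  classical
  refine Matrix.det_eq_zero_of_row_eq_zero i fun j => ?_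
  rw [Matrix.of_apply, orthonormal_iff_ite.mp he, if_neg]
  exact fun h => hi ⟨j, h⟩

theorem IsDerivationExtension.apply_wedge_dual {V : Type*} [NormedAddCommGroup V]
    [InnerProductSpace ℝ V] {n p : ℕ} {A : V →ₗ[ℝ] V} (e : OrthonormalBasis (Fin n) ℝ V)
    {k : Fin n → ℝ} (heig : ∀ i, A (e i) = k i • e i)
    {D : V [⋀^Fin p]→ₗ[ℝ] ℝ →ₗ[ℝ] V [⋀^Fin p]→ₗ[ℝ] ℝ} (hD : IsDerivationExtension A D)
    {a : Finset (Fin n)} (ha : a.card = p) {Θ : V [⋀^Fin p]→ₗ[ℝ] ℝ}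
    (hΘ : ∀ v : Fin p → V,
      Θ v = Matrix.det (Matrix.of fun i j : Fin p =>
        (inner ℝ (e ((a.orderIsoOfFin ha j : a) : Fin n)) (v i) : ℝ))) :
    D Θ = (∑ i ∈ a, k i) • Θ := by
  refine e.toBasis.ext_alternating fun v hv => ?_
  simp only [OrthonormalBasis.coe_toBasis, AlternatingMap.smul_apply,
    hD.apply_eigenvectors heig]
  by_cases hva : ∀ i, v i ∈ a
  · rw [sum_comp_eq_sum_of_injective hv hva (by rw [ha, Fintype.card_fin])]
  · obtain ⟨i, hi⟩ := not_forall.mp hva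
    have hvanish : Θ (fun i => e (v i)) = 0 := by
      rw [hΘ]
      refine e.orthonormal.det_inner_eq_zero_of_notMem_range _ (i := i) ?_
      rintro ⟨j, hj⟩
      exact hi (hj ▸ (a.orderIsoOfFin ha j).2)
    rw [hvanish, smul_zero, smul_zero]

theorem LinearMap.smul_sub_comp_self_apply_of_eigen {R M : Type*} [CommRing R]
    [AddCommGroup M] [Module R M] {f : M →ₗ[R] M} {x : M} {c : R} (hx : f x = c • x) (c' : R) :
    ((c + c') • f - f ∘ₗ f) x = (c * c') • x := by
  simp only [LinearMap.sub_apply, LinearMap.smul_apply, LinearMap.comp_apply, hx, map_smul,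
    smul_smul, ← sub_smul]
  ring_nf

theorem stmt10_general {V : Type*} [NormedAddCommGroup V] [InnerProductSpace ℝ V]
    (n p : ℕ)
    (A : V →ₗ[ℝ] V)
    (e : OrthonormalBasis (Fin n) ℝ V) (k : Fin n → ℝ)
    (heig : ∀ i, A (e i) = k i • e i)
    (Ap : AlternatingMap ℝ V ℝ (Fin p) →ₗ[ℝ] AlternatingMap ℝ V ℝ (Fin p))
    (hAp : ∀ (ω : AlternatingMap ℝ V ℝ (Fin p)) (v : Fin p → V),
      Ap ω v = ∑ i : Fin p, ω (Function.update v i (A (v i))))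
    (a : Finset (Fin n)) (ha : a.card = p)
    (Θ : AlternatingMap ℝ V ℝ (Fin p))
    (hΘ : ∀ v : Fin p → V,
      Θ v = Matrix.det (Matrix.of fun i j : Fin p =>
        (inner ℝ (e ((a.orderIsoOfFin ha j : a) : Fin n)) (v i) : ℝ))) :
    ((∑ i : Fin n, k i) • Ap - Ap ∘ₗ Ap) Θ =
      ((∑ i ∈ a, k i) * (∑ i ∈ aᶜ, k i)) • Θ := by
  rw [← sum_add_sum_compl a k]
  exact LinearMap.smul_sub_comp_self_apply_of_eigen
    (IsDerivationExtension.apply_wedge_dual e heig hAp ha hΘ) _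

/-- Savo: let `A` be a self-adjoint endomorphism of an
`n`-dimensional real inner product space `V` with orthonormal eigenbasis `e` and
eigenvalues `k`. Let `Ap = A^{[p]}` be the derivation extension of `A` to
alternating `p`-forms, `(A^{[p]}ω)(v₁,…,v_p) = ∑ i ω(v₁,…,A vᵢ,…,v_p)`, and
`T_A^{[p]} = (tr A) • A^{[p]} - A^{[p]} ∘ A^{[p]}`. Then for every `p`-subset
`a` of `{1,…,n}`, the wedge `Θ_a` of the corresponding dual basis elements
(given by the determinant formula) is an eigenvector of `T_A^{[p]}` with
eigenvalue `K_a * K_{★a}`, where `K_a = ∑_{i ∈ a} k i` and `★a = aᶜ`. -/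
theorem stmt10 {V : Type*} [NormedAddCommGroup V] [InnerProductSpace ℝ V]
    (n p : ℕ) (hp1 : 1 ≤ p) (hpn : p ≤ n)
    (A : V →ₗ[ℝ] V) (hA : A.IsSymmetric)
    (e : OrthonormalBasis (Fin n) ℝ V) (k : Fin n → ℝ)
    (heig : ∀ i, A (e i) = k i • e i)
    (Ap : AlternatingMap ℝ V ℝ (Fin p) →ₗ[ℝ] AlternatingMap ℝ V ℝ (Fin p))
    (hAp : ∀ (ω : AlternatingMap ℝ V ℝ (Fin p)) (v : Fin p → V),
      Ap ω v = ∑ i : Fin p, ω (Function.update v i (A (v i))))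
    (a : Finset (Fin n)) (ha : a.card = p)
    (Θ : AlternatingMap ℝ V ℝ (Fin p))
    (hΘ : ∀ v : Fin p → V,
      Θ v = Matrix.det (Matrix.of fun i j : Fin p =>
        (inner ℝ (e ((a.orderIsoOfFin ha j : a) : Fin n)) (v i) : ℝ))) :
    ((∑ i : Fin n, k i) • Ap - Ap ∘ₗ Ap) Θ =
      ((∑ i ∈ a, k i) * (∑ i ∈ aᶜ, k i)) • Θ :=
  stmt10_general n p A e k heig Ap hAp a ha Θ hΘ
end

section
/- Let n ≥ 3, 1 ≤ q ≤ n−1, 1 ≤ ℓ ≤ min{q, n−q}, and let A be a self-adjoint endomorphism of an n-dimensional inner product space whose q smallest eigenvalues sum to a nonnegative number, with normalized trace H = (tr A)/n. Then every eigenvalue λ of T_A^{[ℓ]} = (tr A)A^{[ℓ]} − A^{[ℓ]}∘A^{[ℓ]} satisfies λ ≥ −ℓ(n−ℓ) · ((q−ℓ)/ℓ) · (n/(n−q))² · H². -/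
/-!
Evaluating an eigenform `ω` at a basis tuple `e ∘ v` on which it does not vanish shows
`λ = K (tr A - K)`, where `K` is the sum of the eigenvalues indexed by `v`. The partial sums of
the sorted eigenvalues are convex in the number of terms, and they are nonnegative from the
`q`-th on; this confines `K` to `[-(q - ℓ) tr A / (n - q), tr A]`, and the concave function
`K ↦ K (tr A - K)` attains its minimum on that interval at the left endpoint.
-/

open Finset

namespace Finset

variable {ι M : Type*}

theorem card_nsmul_sum_le_card_nsmul_sum [AddCommMonoid M] [PartialOrder M]
    [IsOrderedAddMonoid M] {s t : Finset ι} {f : ι → M}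
    (h : ∀ i ∈ s, ∀ j ∈ t, f i ≤ f j) :
    #t • ∑ i ∈ s, f i ≤ #s • ∑ j ∈ t, f j := by
  calc #t • ∑ i ∈ s, f i = ∑ i ∈ s, ∑ _j ∈ t, f i := by simp [smul_sum]
    _ ≤ ∑ i ∈ s, ∑ j ∈ t, f j := sum_le_sum fun i hi => sum_le_sum fun j hj => h i hi j hj
    _ = #s • ∑ j ∈ t, f j := by rw [sum_const]

theorem sum_le_sum_of_card_eq_of_forall_le [AddCommMonoid M] [LinearOrder M]
    [IsOrderedCancelAddMonoid M] {s t : Finset ι} {f : ι → M} (hst : #s = #t)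
    (h : ∀ i ∈ s, ∀ j ∈ t, f i ≤ f j) :
    ∑ i ∈ s, f i ≤ ∑ j ∈ t, f j := by
  rcases s.eq_empty_or_nonempty with rfl | hs
  · simp [card_eq_zero.mp hst.symm]
  · refine le_of_nsmul_le_nsmul_right (card_ne_zero.2 hs) ?_
    simpa only [hst] using card_nsmul_sum_le_card_nsmul_sum h

end Finset

section InitialSum

variable {n : ℕ}

def initialSum (k : Fin n → ℝ) (m : ℕ) : ℝ :=
  ∑ i ∈ univ.filter (fun i : Fin n => (i : ℕ) < m), k i

variable {k : Fin n → ℝ}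

theorem initialSum_zero : initialSum k 0 = 0 := by
  simp [initialSum]

theorem initialSum_self : initialSum k n = ∑ i, k i := by
  simp [initialSum]

theorem initialSum_le_sum_of_card_eq (hk : Monotone k) {s : Finset (Fin n)}
    {m : ℕ} (hs : #s = m) : initialSum k m ≤ ∑ j ∈ s, k j := by
  have hm : #{i : Fin n | i < m} = #s := by
    rw [Fin.card_filter_val_lt, hs, min_eq_right (hs ▸ (card_le_univ s).trans_eq (Fintype.card_fin n))]
  rw [initialSum, ← sum_sdiff_le_sum_sdiff]
  refine sum_le_sum_of_card_eq_of_forall_le (card_sdiff_comm hm) fun i hi j hj => hk ?_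
  simp only [mem_sdiff, mem_filter, mem_univ, true_and] at hi hj
  exact Fin.le_def.2 (by omega)

/-- Discrete convexity of `m ↦ initialSum k m`: its increments `k m` increase. -/
theorem initialSum_sub_mul_le (hk : Monotone k) {a b c : ℕ} (hab : a ≤ b)
    (hbc : b ≤ c) (hcn : c ≤ n) :
    ((c : ℝ) - b) * (initialSum k b - initialSum k a) ≤
      ((b : ℝ) - a) * (initialSum k c - initialSum k b) := by
  let P : ℕ → Finset (Fin n) := fun x => univ.filter fun i => (i : ℕ) < x
  have hsub : ∀ {x y : ℕ}, x ≤ y → P x ⊆ P y := fun hxy i => by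
    simp only [P, mem_filter, mem_univ, true_and]; omega
  have hcard : ∀ {x y : ℕ}, x ≤ y → y ≤ n → (#(P y \ P x) : ℝ) = y - x :=
    fun hxy hyn => by
      rw [card_sdiff_of_subset (hsub hxy), Fin.card_filter_val_lt, Fin.card_filter_val_lt,
        min_eq_right hyn, min_eq_right (hxy.trans hyn), Nat.cast_sub hxy]
  have key := card_nsmul_sum_le_card_nsmul_sum (f := k) (s := P b \ P a) (t := P c \ P b)
    fun i hi j hj => hk <| by
      simp only [P, mem_sdiff, mem_filter, mem_univ, true_and] at hi hj
      exact Fin.le_def.2 (by omega)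
  rw [nsmul_eq_mul, nsmul_eq_mul, hcard hbc hcn, hcard hab (hbc.trans hcn),
    sum_sdiff_eq_sub (hsub hab), sum_sdiff_eq_sub (hsub hbc)] at key
  exact key

theorem initialSum_nonneg_of_le (hk : Monotone k) {q m : ℕ} (hq : 0 < q)
    (hqm : q ≤ m) (hmn : m ≤ n) (hS : 0 ≤ initialSum k q) : 0 ≤ initialSum k m := by
  have h := initialSum_sub_mul_le hk (Nat.zero_le q) hqm hmn
  rw [initialSum_zero, Nat.cast_zero, sub_zero, sub_zero] at h
  have hq' : (0 : ℝ) < q := Nat.cast_pos.2 hq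
  have hqm' : (q : ℝ) ≤ m := Nat.cast_le.2 hqm
  nlinarith

theorem neg_mul_sum_univ_le_mul_sum_of_initialSum_nonneg (hk : Monotone k)
    {q ℓ : ℕ} (hS : 0 ≤ initialSum k q) (hlq : ℓ ≤ q) (hqn : q ≤ n) {s : Finset (Fin n)}
    (hs : #s = ℓ) :
    -(((q : ℝ) - ℓ) * ∑ i, k i) ≤ ((n : ℝ) - q) * ∑ j ∈ s, k j := by
  have hconv := initialSum_sub_mul_le hk hlq hqn le_rfl
  rw [initialSum_self] at hconv
  have hnq : (0 : ℝ) ≤ n - q := sub_nonneg.2 (Nat.cast_le.2 hqn)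
  have hnl : (0 : ℝ) ≤ n - ℓ := sub_nonneg.2 (Nat.cast_le.2 (hlq.trans hqn))
  have hK := mul_le_mul_of_nonneg_left (initialSum_le_sum_of_card_eq hk hs) hnq
  nlinarith [mul_nonneg hnl hS]

theorem sum_le_sum_univ_of_initialSum_nonneg (hk : Monotone k) {q ℓ : ℕ} (hq : 0 < q)
    (hS : 0 ≤ initialSum k q) (hlqn : ℓ + q ≤ n) {s : Finset (Fin n)} (hs : #s = ℓ) :
    ∑ j ∈ s, k j ≤ ∑ i, k i := by
  have hsc : #sᶜ = n - ℓ := by rw [card_compl, Fintype.card_fin, hs]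
  have hc := (initialSum_nonneg_of_le hk hq (m := n - ℓ) (by omega) (by omega) hS).trans
    (initialSum_le_sum_of_card_eq hk hsc)
  rw [← sum_add_sum_compl s]
  linarith

end InitialSum

theorem neg_mul_add_mul_sq_div_le {a b σ K : ℝ} (ha : 0 < a) (hb : 0 ≤ b)
    (hlow : -(b * σ) ≤ a * K) (hup : K ≤ σ) :
    -(b * (a + b) * σ ^ 2) / a ^ 2 ≤ σ * K - K ^ 2 := by
  have hσ : 0 ≤ σ := by nlinarith
  rw [div_le_iff₀ (by positivity)]
  nlinarith [mul_nonneg (by linarith : 0 ≤ a * K + b * σ)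
    (by nlinarith : 0 ≤ a * (σ - K) + b * σ)]

namespace AlternatingMap

variable {R M N ι κ : Type*} [CommRing R] [AddCommGroup M] [Module R M] [AddCommGroup N]
  [Module R N]

theorem exists_injective_apply_basis_ne_zero [Finite ι] (b : Module.Basis κ R M)
    {ω : M [⋀^ι]→ₗ[R] N} (hω : ω ≠ 0) : ∃ v : ι → κ, Function.Injective v ∧ ω (b ∘ v) ≠ 0 := by
  contrapose! hω
  exact b.ext_alternating fun v hv => hω v hv

theorem sum_apply_update_of_eigenvectors [Fintype ι] [DecidableEq ι] (η : M [⋀^ι]→ₗ[R] N)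
    {A : M →ₗ[R] M} {b : κ → M} {k : κ → R} (hb : ∀ j, A (b j) = k j • b j) (v : ι → κ) :
    ∑ i, η (Function.update (b ∘ v) i (A (b (v i)))) = (∑ i, k (v i)) • η (b ∘ v) := by
  rw [sum_smul]
  refine sum_congr rfl fun i _ => ?_
  rw [hb, η.map_update_smul, ← Function.comp_apply (f := b) (g := v), Function.update_eq_self]

theorem eq_sub_sq_of_smul_sub_comp_self_eq [IsDomain R]
    {T : (M [⋀^ι]→ₗ[R] R) →ₗ[R] (M [⋀^ι]→ₗ[R] R)} {x : ι → M} {K : R}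
    (hT : ∀ η, T η x = K * η x) {σ lam : R} {ω : M [⋀^ι]→ₗ[R] R}
    (hω : ω x ≠ 0) (h : (σ • T - T ∘ₗ T) ω = lam • ω) : lam = σ * K - K ^ 2 := by
  have hx := congrArg (fun η : M [⋀^ι]→ₗ[R] R => η x) h
  simp only [LinearMap.sub_apply, LinearMap.smul_apply, LinearMap.comp_apply, sub_apply,
    smul_apply, smul_eq_mul, hT] at hx
  have : (σ * K - K ^ 2 - lam) * ω x = 0 := by linear_combination hx
  exact (sub_eq_zero.1 ((mul_eq_zero.1 this).resolve_right hω)).symm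

end AlternatingMap

theorem stmt12_general {V : Type*} [NormedAddCommGroup V] [InnerProductSpace ℝ V]
    (n q ℓ : ℕ)
    (hl1 : 1 ≤ ℓ) (hlq : ℓ ≤ q) (hlnq : ℓ + q ≤ n)
    (A : V →ₗ[ℝ] V)
    (e : OrthonormalBasis (Fin n) ℝ V) (k : Fin n → ℝ) (hk : Monotone k)
    (heig : ∀ i, A (e i) = k i • e i)
    (hqnonneg : 0 ≤ ∑ i ∈ Finset.univ.filter (fun i : Fin n => (i : ℕ) < q), k i)
    (H : ℝ) (hH : H = (∑ i : Fin n, k i) / n)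
    (Ap : AlternatingMap ℝ V ℝ (Fin ℓ) →ₗ[ℝ] AlternatingMap ℝ V ℝ (Fin ℓ))
    (hAp : ∀ (ω : AlternatingMap ℝ V ℝ (Fin ℓ)) (v : Fin ℓ → V),
      Ap ω v = ∑ i : Fin ℓ, ω (Function.update v i (A (v i))))
    (lam : ℝ) (ω : AlternatingMap ℝ V ℝ (Fin ℓ)) (hω : ω ≠ 0)
    (heigen : ((∑ i : Fin n, k i) • Ap - Ap ∘ₗ Ap) ω = lam • ω) :
    lam ≥ -((ℓ : ℝ) * ((n : ℝ) - ℓ) * (((q : ℝ) - ℓ) / ℓ) *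
      ((n : ℝ) / ((n : ℝ) - q)) ^ 2 * H ^ 2) := by
  obtain ⟨v, hv, hωv⟩ := AlternatingMap.exists_injective_apply_basis_ne_zero e.toBasis hω
  rw [e.coe_toBasis] at hωv
  have hlam := AlternatingMap.eq_sub_sq_of_smul_sub_comp_self_eq
    (fun η => (hAp η _).trans (η.sum_apply_update_of_eigenvectors heig v)) hωv heigen
  have hs : #(univ.image v) = ℓ := by
    rw [card_image_of_injective _ hv, card_univ, Fintype.card_fin]
  have hK : ∑ j ∈ univ.image v, k j = ∑ i, k (v i) := sum_image fun _ _ _ _ h => hv h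
  have hlow := neg_mul_sum_univ_le_mul_sum_of_initialSum_nonneg hk hqnonneg hlq (by omega) hs
  have hup := sum_le_sum_univ_of_initialSum_nonneg hk (by omega) hqnonneg hlnq hs
  rw [hK] at hlow hup
  have hnq : (q : ℝ) < n := by exact_mod_cast (show q < n by omega)
  have hl : (ℓ : ℝ) ≤ q := by exact_mod_cast hlq
  have key := neg_mul_add_mul_sq_div_le (sub_pos.2 hnq) (sub_nonneg.2 hl) hlow hup
  have hl0 : (ℓ : ℝ) ≠ 0 := by positivity
  have hn0 : (n : ℝ) ≠ 0 := Nat.cast_ne_zero.2 (by omega)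
  have hnq0 : (n : ℝ) - q ≠ 0 := (sub_pos.2 hnq).ne'
  rw [ge_iff_le, hlam, hH]
  convert key using 1
  field_simp
  ring

/-- algebraic core of Proposition `propb`: let `n ≥ 3`,
`1 ≤ q ≤ n - 1`, `1 ≤ ℓ ≤ min {q, n - q}`, and let `A` be a self-adjoint
endomorphism of an `n`-dimensional real inner product space whose `q` smallest
eigenvalues sum to a nonnegative number, with normalized trace `H = (tr A)/n`.
Then every eigenvalue `lam` of `T_A^{[ℓ]} = (tr A) • A^{[ℓ]} - A^{[ℓ]} ∘ A^{[ℓ]}`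
(acting on alternating `ℓ`-forms) satisfies
`lam ≥ -ℓ(n-ℓ) ((q-ℓ)/ℓ) (n/(n-q))² H²`. -/
theorem stmt12 {V : Type*} [NormedAddCommGroup V] [InnerProductSpace ℝ V]
    (n q ℓ : ℕ) (hn : 3 ≤ n) (hq1 : 1 ≤ q) (hqn : q + 1 ≤ n)
    (hl1 : 1 ≤ ℓ) (hlq : ℓ ≤ q) (hlnq : ℓ + q ≤ n)
    (A : V →ₗ[ℝ] V) (hA : A.IsSymmetric)
    (e : OrthonormalBasis (Fin n) ℝ V) (k : Fin n → ℝ) (hk : Monotone k)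
    (heig : ∀ i, A (e i) = k i • e i)
    (hqnonneg : 0 ≤ ∑ i ∈ Finset.univ.filter (fun i : Fin n => (i : ℕ) < q), k i)
    (H : ℝ) (hH : H = (∑ i : Fin n, k i) / n)
    (Ap : AlternatingMap ℝ V ℝ (Fin ℓ) →ₗ[ℝ] AlternatingMap ℝ V ℝ (Fin ℓ))
    (hAp : ∀ (ω : AlternatingMap ℝ V ℝ (Fin ℓ)) (v : Fin ℓ → V),
      Ap ω v = ∑ i : Fin ℓ, ω (Function.update v i (A (v i))))
    (lam : ℝ) (ω : AlternatingMap ℝ V ℝ (Fin ℓ)) (hω : ω ≠ 0)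
    (heigen : ((∑ i : Fin n, k i) • Ap - Ap ∘ₗ Ap) ω = lam • ω) :
    lam ≥ -((ℓ : ℝ) * ((n : ℝ) - ℓ) * (((q : ℝ) - ℓ) / ℓ) *
      ((n : ℝ) / ((n : ℝ) - q)) ^ 2 * H ^ 2) :=
  stmt12_general n q ℓ hl1 hlq hlnq A e k hk heig hqnonneg H hH Ap hAp lam ω hω heigen
end

section
/- For 0 < r < 1 and integers 1 ≤ p ≤ q ≤ n−1 with p ≤ q, the list of principal curvatures of the torus T^n_p(r) (namely −√(1−r²)/r with multiplicity p and r/√(1−r²) with multiplicity n−p) is q-convex (the sum of the smallest q entries is ≥ 0) if and only if r² ≥ p/q. -/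
/-- for `1 ≤ p ≤ q ≤ n - 1` and `0 < r < 1`, the torus
`T^n_p(r) = S^p(r) × S^{n-p}(√(1-r²)) ⊂ S^{n+1}` is `q`-convex (the sum of its
`q` smallest principal curvatures, namely `p` copies of `-√(1-r²)/r` and `q - p`
copies of `r/√(1-r²)`, is nonnegative) if and only if `r² ≥ p/q`. -/
theorem stmt14 (n p q : ℕ) (hp1 : 1 ≤ p) (hpq : p ≤ q) (hqn : q + 1 ≤ n)
    (r : ℝ) (hr0 : 0 < r) (hr1 : r < 1) :
    0 ≤ (p : ℝ) * (-(Real.sqrt (1 - r ^ 2) / r)) +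
        ((q : ℝ) - p) * (r / Real.sqrt (1 - r ^ 2)) ↔
      (p : ℝ) / q ≤ r ^ 2 := by
  have h1 : 0 < 1 - r ^ 2 := by nlinarith
  set s := Real.sqrt (1 - r ^ 2) with hsdef
  have hs : 0 < s := Real.sqrt_pos.mpr h1
  have hs2 : s ^ 2 = 1 - r ^ 2 := Real.sq_sqrt h1.le
  have hq0 : (0 : ℝ) < q := by
    exact_mod_cast Nat.lt_of_lt_of_le (Nat.lt_of_lt_of_le Nat.zero_lt_one hp1) hpq
  have hp0 : (0 : ℝ) ≤ p := Nat.cast_nonneg p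
  rw [div_le_iff₀ hq0]
  constructor
  · intro h
    have e : ((p : ℝ) * (-(s / r)) + ((q : ℝ) - p) * (r / s)) * (r * s) =
        -((p : ℝ) * s ^ 2) + ((q : ℝ) - p) * r ^ 2 := by
      field_simp
    have h' : 0 ≤ -((p : ℝ) * s ^ 2) + ((q : ℝ) - p) * r ^ 2 := by
      rw [← e]; exact mul_nonneg h (mul_pos hr0 hs).le
    nlinarith
  · intro h
    have key : 0 ≤ -((p : ℝ) * s ^ 2) + ((q : ℝ) - p) * r ^ 2 := by nlinarith
    have : (p : ℝ) * (-(s / r)) + ((q : ℝ) - p) * (r / s) =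
        (-((p : ℝ) * s ^ 2) + ((q : ℝ) - p) * r ^ 2) / (r * s) := by
      field_simp
    rw [this]
    positivity
end
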